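/- There exists a unique real number p0 in the open interval (4,5) such that the configurations T1 = {(0,0), (1/2,0), (1/2,1/2)} and T2 = {(0,1/2), (1/2,1/4), (1/2,3/4)} on the flat torus have equal Riesz p0-energy; for p < p0 the energy of T1 is smaller, and for p > p0 the energy of T2 is smaller. (Equivalently: 2·2^p + (√2)^p = 2·(4/√5)^p + 2^p has a unique positive solution, lying in (4,5).) -/

import Mathlib

/-- Riesz `p`-energy of `T₁ = {(0,0),(1/2,0),(1/2,1/2)}` on the flat torus. -/
noncomputable def energyT1 (p : ℝ) : ℝ := 2 * 2 ^ p + Real.sqrt 2 ^ p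

/-- Riesz `p`-energy of `T₂ = {(0,1/2),(1/2,1/4),(1/2,3/4)}` on the flat torus. -/
noncomputable def energyT2 (p : ℝ) : ℝ := 2 * (4 / Real.sqrt 5) ^ p + 2 ^ p

namespace Crossing
open Real

noncomputable def u : ℝ := 2 * Real.sqrt 2 / Real.sqrt 5
noncomputable def k (p : ℝ) : ℝ := 2 * u ^ p - Real.sqrt 2 ^ p - 1

lemma s2_pos : (0:ℝ) < Real.sqrt 2 := Real.sqrt_pos.mpr (by norm_num)
lemma s5_pos : (0:ℝ) < Real.sqrt 5 := Real.sqrt_pos.mpr (by norm_num)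
lemma s2_sq : Real.sqrt 2 ^ 2 = 2 := Real.sq_sqrt (by norm_num)
lemma s5_sq : Real.sqrt 5 ^ 2 = 5 := Real.sq_sqrt (by norm_num)

lemma u_pos : 0 < u := by unfold u; positivity

lemma one_lt_u : 1 < u := by
  rw [u, lt_div_iff₀ s5_pos, one_mul]
  nlinarith [s2_sq, s5_sq, s2_pos, s5_pos]

lemma one_lt_v : 1 < Real.sqrt 2 := by nlinarith [s2_sq, s2_pos]

noncomputable def w : ℝ := Real.sqrt 2 / u
noncomputable def C : ℝ := 2 * Real.log u / Real.log (Real.sqrt 2)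
noncomputable def pstar : ℝ := Real.log C / Real.log w

lemma w_eq : w = Real.sqrt 5 / 2 := by
  rw [w, u]
  field_simp

lemma one_lt_w : 1 < w := by
  rw [w_eq]; nlinarith [s5_sq, s5_pos]

lemma u_sq : u ^ 2 = 8 / 5 := by
  rw [u, div_pow]
  rw [show (2 * Real.sqrt 2) ^ 2 = 4 * Real.sqrt 2 ^ 2 by ring, s2_sq, s5_sq]
  norm_num

lemma one_lt_C : 1 < C := by
  rw [C]
  have h1 : Real.sqrt 2 < u ^ 2 := by rw [u_sq]; nlinarith [s2_sq, s2_pos]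
  have h2 : Real.log (Real.sqrt 2) < 2 * Real.log u := by
    have := Real.log_lt_log s2_pos h1
    rwa [Real.log_pow, Nat.cast_ofNat] at this
  rw [lt_div_iff₀ (Real.log_pos one_lt_v)]
  linarith

noncomputable def k' (p : ℝ) : ℝ :=
  2 * (u ^ p * Real.log u) - Real.sqrt 2 ^ p * Real.log (Real.sqrt 2)

lemma hasDerivAt_k (p : ℝ) : HasDerivAt k (k' p) p := by
  have h1 := (Real.hasStrictDerivAt_const_rpow u_pos p).hasDerivAt
  have h2 := (Real.hasStrictDerivAt_const_rpow s2_pos p).hasDerivAt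
  exact ((h1.const_mul 2).sub h2).sub_const 1

lemma w_rpow_pstar : w ^ pstar = C := by
  rw [Real.rpow_def_of_pos (lt_trans one_pos one_lt_w), pstar, mul_comm,
    div_mul_cancel₀ _ (ne_of_gt (Real.log_pos one_lt_w)),
    Real.exp_log (lt_trans one_pos one_lt_C)]

lemma v_eq : Real.sqrt 2 = w * u := by
  rw [w, div_mul_cancel₀ _ (ne_of_gt u_pos)]

lemma key_ineq {p : ℝ} (h : w ^ p < C) : 0 < k' p := by
  have hup : (0:ℝ) < u ^ p := Real.rpow_pos_of_pos u_pos p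
  have hlv : 0 < Real.log (Real.sqrt 2) := Real.log_pos one_lt_v
  have hv : Real.sqrt 2 ^ p = w ^ p * u ^ p := by
    rw [v_eq, Real.mul_rpow (le_of_lt (lt_trans one_pos one_lt_w)) (le_of_lt u_pos)]
  have hC : C * (u ^ p * Real.log (Real.sqrt 2)) = 2 * (u ^ p * Real.log u) := by
    rw [C]; field_simp
  have : w ^ p * (u ^ p * Real.log (Real.sqrt 2)) < C * (u ^ p * Real.log (Real.sqrt 2)) :=
    mul_lt_mul_of_pos_right h (by positivity)
  rw [hC] at this
  rw [k', hv]
  linarith [this]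

lemma key_ineq' {p : ℝ} (h : C < w ^ p) : k' p < 0 := by
  have hup : (0:ℝ) < u ^ p := Real.rpow_pos_of_pos u_pos p
  have hlv : 0 < Real.log (Real.sqrt 2) := Real.log_pos one_lt_v
  have hv : Real.sqrt 2 ^ p = w ^ p * u ^ p := by
    rw [v_eq, Real.mul_rpow (le_of_lt (lt_trans one_pos one_lt_w)) (le_of_lt u_pos)]
  have hC : C * (u ^ p * Real.log (Real.sqrt 2)) = 2 * (u ^ p * Real.log u) := by
    rw [C]; field_simp
  have : C * (u ^ p * Real.log (Real.sqrt 2)) < w ^ p * (u ^ p * Real.log (Real.sqrt 2)) :=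
    mul_lt_mul_of_pos_right h (by positivity)
  rw [hC] at this
  rw [k', hv]
  linarith [this]

lemma k'_pos {p : ℝ} (hp : p < pstar) : 0 < k' p :=
  key_ineq (by rw [← w_rpow_pstar]; exact (Real.rpow_lt_rpow_left_iff one_lt_w).mpr hp)

lemma k'_neg {p : ℝ} (hp : pstar < p) : k' p < 0 :=
  key_ineq' (by rw [← w_rpow_pstar]; exact (Real.rpow_lt_rpow_left_iff one_lt_w).mpr hp)

lemma k_cont : Continuous k :=
  continuous_iff_continuousAt.mpr fun p => (hasDerivAt_k p).continuousAt

lemma k_mono : StrictMonoOn k (Set.Iic pstar) := by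
  apply strictMonoOn_of_deriv_pos (convex_Iic _) k_cont.continuousOn
  intro p hp
  rw [interior_Iic] at hp
  rw [(hasDerivAt_k p).deriv]
  exact k'_pos hp

lemma k_anti : StrictAntiOn k (Set.Ici pstar) := by
  apply strictAntiOn_of_deriv_neg (convex_Ici _) k_cont.continuousOn
  intro p hp
  rw [interior_Ici] at hp
  rw [(hasDerivAt_k p).deriv]
  exact k'_neg hp

lemma pstar_nonneg : 0 ≤ pstar :=
  le_of_lt (div_pos (Real.log_pos one_lt_C) (Real.log_pos one_lt_w))

lemma k_zero : k 0 = 0 := by simp [k]; norm_num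

lemma k_four : 0 < k 4 := by
  have h4 : u ^ (4:ℝ) = 64 / 25 := by
    rw [show (4:ℝ) = ((4:ℕ):ℝ) by norm_num, Real.rpow_natCast,
      show (4:ℕ) = 2 * 2 by norm_num, pow_mul, u_sq]
    norm_num
  have hv4 : Real.sqrt 2 ^ (4:ℝ) = 4 := by
    rw [show (4:ℝ) = ((4:ℕ):ℝ) by norm_num, Real.rpow_natCast,
      show (4:ℕ) = 2 * 2 by norm_num, pow_mul, s2_sq]
    norm_num
  rw [k, h4, hv4]; norm_num

lemma k_five : k 5 < 0 := by
  have h5 : u ^ (5:ℝ) = 128 * Real.sqrt 2 / (25 * Real.sqrt 5) := by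
    rw [show (5:ℝ) = ((5:ℕ):ℝ) by norm_num, Real.rpow_natCast, u, div_pow]
    rw [show (2 * Real.sqrt 2) ^ 5 = 32 * (Real.sqrt 2 ^ 2) ^ 2 * Real.sqrt 2 by ring,
      show Real.sqrt 5 ^ 5 = (Real.sqrt 5 ^ 2) ^ 2 * Real.sqrt 5 by ring, s2_sq, s5_sq]
    rw [show ((2:ℝ) ^ 2 : ℝ) = 4 by norm_num]
    ring_nf
  have hv5 : Real.sqrt 2 ^ (5:ℝ) = 4 * Real.sqrt 2 := by
    rw [show (5:ℝ) = ((5:ℕ):ℝ) by norm_num, Real.rpow_natCast,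
      show Real.sqrt 2 ^ 5 = (Real.sqrt 2 ^ 2) ^ 2 * Real.sqrt 2 by ring, s2_sq]
    norm_num
  have hs2 : Real.sqrt 2 < 1.415 := by nlinarith [s2_sq, s2_pos]
  have hs5 : (2.23:ℝ) < Real.sqrt 5 := by nlinarith [s5_sq, s5_pos]
  have h10 : (Real.sqrt 2 * Real.sqrt 5) ^ 2 = 10 := by rw [mul_pow, s2_sq, s5_sq]; norm_num
  have hs10 : (3.16:ℝ) < Real.sqrt 2 * Real.sqrt 5 := by
    nlinarith [h10, mul_pos s2_pos s5_pos]
  rw [k, h5, hv5, sub_sub, sub_neg,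
    show 2 * (128 * Real.sqrt 2 / (25 * Real.sqrt 5)) = 256 * Real.sqrt 2 / (25 * Real.sqrt 5) by ring,
    div_lt_iff₀ (by positivity)]
  nlinarith [hs2, hs5, hs10, s5_pos]

lemma exists_root : ∃ p₀ ∈ Set.Ioo (4:ℝ) 5, k p₀ = 0 := by
  have h := intermediate_value_Ioo' (by norm_num : (4:ℝ) ≤ 5) k_cont.continuousOn
  have h0 : (0:ℝ) ∈ Set.Ioo (k 5) (k 4) := ⟨k_five, k_four⟩
  obtain ⟨p₀, hp₀, hk⟩ := h h0
  exact ⟨p₀, hp₀, hk⟩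

lemma bridge (p : ℝ) : energyT2 p - energyT1 p = Real.sqrt 2 ^ p * k p := by
  have h1 : Real.sqrt 2 ^ p * u ^ p = (4 / Real.sqrt 5) ^ p := by
    rw [← Real.mul_rpow (le_of_lt s2_pos) (le_of_lt u_pos)]
    congr 1
    rw [u]
    rw [eq_div_iff (ne_of_gt s5_pos)]
    field_simp
    nlinarith [s2_sq]
  have h2 : Real.sqrt 2 ^ p * Real.sqrt 2 ^ p = 2 ^ p := by
    rw [← Real.mul_rpow (le_of_lt s2_pos) (le_of_lt s2_pos), Real.mul_self_sqrt (by norm_num)]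
  have key : Real.sqrt 2 ^ p * k p
      = 2 * (Real.sqrt 2 ^ p * u ^ p) - Real.sqrt 2 ^ p * Real.sqrt 2 ^ p - Real.sqrt 2 ^ p := by
    rw [k]; ring
  rw [key, h1, h2, energyT1, energyT2]
  ring

theorem energy_T1_T2_crossing' :
    ∃ p₀ : ℝ, p₀ ∈ Set.Ioo (4 : ℝ) 5 ∧ energyT1 p₀ = energyT2 p₀ ∧
      (∀ p : ℝ, 0 < p → p < p₀ → energyT1 p < energyT2 p) ∧
      (∀ p : ℝ, p₀ < p → energyT2 p < energyT1 p) ∧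
      (∀ q : ℝ, 0 < q → energyT1 q = energyT2 q → q = p₀) := by
  obtain ⟨p₀, hp₀, hk0⟩ := exists_root
  have hps : pstar < p₀ := by
    by_contra h
    push_neg at h
    have h04 : (0:ℝ) < p₀ := by linarith [hp₀.1]
    have := k_mono (Set.mem_Iic.mpr (le_trans (le_of_lt h04) h)) (Set.mem_Iic.mpr h) h04
    rw [k_zero, hk0] at this
    exact lt_irrefl 0 this
  have kpos : ∀ p : ℝ, 0 < p → p < p₀ → 0 < k p := by
    intro p hp hpp
    rcases le_or_gt p pstar with h | h
    · have := k_mono (Set.mem_Iic.mpr (le_trans (le_of_lt hp) h)) (Set.mem_Iic.mpr h) hp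
      rwa [k_zero] at this
    · have := k_anti (Set.mem_Ici.mpr (le_of_lt h)) (Set.mem_Ici.mpr (le_of_lt hps)) hpp
      rwa [hk0] at this
  have kneg : ∀ p : ℝ, p₀ < p → k p < 0 := by
    intro p hpp
    have := k_anti (Set.mem_Ici.mpr (le_of_lt hps))
      (Set.mem_Ici.mpr (le_of_lt (lt_trans hps hpp))) hpp
    rwa [hk0] at this
  refine ⟨p₀, hp₀, ?_, ?_, ?_, ?_⟩
  · have := bridge p₀
    rw [hk0, mul_zero] at this
    linarith
  · intro p hp hpp
    have hb := bridge p
    have : 0 < Real.sqrt 2 ^ p * k p :=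
      mul_pos (Real.rpow_pos_of_pos s2_pos p) (kpos p hp hpp)
    linarith
  · intro p hpp
    have hb := bridge p
    have hkn := kneg p hpp
    have hpow : 0 < Real.sqrt 2 ^ p := Real.rpow_pos_of_pos s2_pos p
    nlinarith
  · intro q hq heq
    have hb := bridge q
    have hkq : k q = 0 := by
      have hpow : Real.sqrt 2 ^ q ≠ 0 := ne_of_gt (Real.rpow_pos_of_pos s2_pos q)
      have : Real.sqrt 2 ^ q * k q = 0 := by rw [← hb, heq]; ring
      exact (mul_eq_zero.mp this).resolve_left hpow
    rcases lt_trichotomy q p₀ with h | h | h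
    · exact absurd hkq (ne_of_gt (kpos q hq h))
    · exact h
    · exact absurd hkq (ne_of_lt (kneg q h))

end Crossing

/-- There is a unique `p₀ ∈ (4,5)` at which the energies of `T₁` and `T₂` agree;
for smaller positive `p` the configuration `T₁` has smaller energy, for larger `p`
the configuration `T₂` has smaller energy, and `p₀` is the unique positive solution
of `2·2^p + (√2)^p = 2·(4/√5)^p + 2^p`. -/
theorem energy_T1_T2_crossing :
    ∃ p₀ : ℝ, p₀ ∈ Set.Ioo (4 : ℝ) 5 ∧ energyT1 p₀ = energyT2 p₀ ∧
      (∀ p : ℝ, 0 < p → p < p₀ → energyT1 p < energyT2 p) ∧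
      (∀ p : ℝ, p₀ < p → energyT2 p < energyT1 p) ∧
      (∀ q : ℝ, 0 < q → energyT1 q = energyT2 q → q = p₀) := by
  exact Crossing.energy_T1_T2_crossing'
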